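/- Let k be a field of characteristic 0 and let σ be the k-algebra automorphism of k[x₀,x₁,y₀,y₁,z₀,z₁] fixing x₀,y₀,z₀ and negating x₁,y₁,z₁. Let R⁺ (resp. R⁻) be the space of trihomogeneous (1,1,1)-forms f with σ(f)=f (resp. σ(f)=−f). Then every trihomogeneous polynomial f of multidegree (2,2,2) with σ(f)=f can be written as a finite sum f = Σᵢ gᵢ·hᵢ + Σⱼ g′ⱼ·h′ⱼ with all gᵢ,hᵢ ∈ R⁺ and all g′ⱼ,h′ⱼ ∈ R⁻. In other words, the multiplication map Φ from pairs of σ-invariant (1,1,1)-forms together with pairs of σ-anti-invariant (1,1,1)-forms surjects onto the 14-dimensional space of σ-invariant (2,2,2)-forms. -/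

import Mathlib

open MvPolynomial

/-- The involution `σ` of type `(-1,-1,-1)` on `k[x₀,x₁,y₀,y₁,z₀,z₁]`:
it fixes `x₀,y₀,z₀` (even indices) and negates `x₁,y₁,z₁` (odd indices).
Variables are indexed by `Fin 6` as `x₀,x₁,y₀,y₁,z₀,z₁`. -/
noncomputable def sigmaInv (k : Type*) [Field k] :
    MvPolynomial (Fin 6) k →ₐ[k] MvPolynomial (Fin 6) k :=
  aeval (fun i : Fin 6 => if Even (i : ℕ) then X i else - X i)

/-- Weight recording the multidegree with respect to the three groups of
variables `{x₀,x₁}`, `{y₀,y₁}`, `{z₀,z₁}`. -/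
def triWeight : Fin 6 → ℕ × ℕ × ℕ :=
  ![(1,0,0), (1,0,0), (0,1,0), (0,1,0), (0,0,1), (0,0,1)]

/-- `R⁺`: the σ-invariant trihomogeneous forms of multidegree (1,1,1). -/
noncomputable def Rplus (k : Type*) [Field k] : Submodule k (MvPolynomial (Fin 6) k) :=
  weightedHomogeneousSubmodule k triWeight ((1,1,1) : ℕ × ℕ × ℕ) ⊓
    LinearMap.ker ((sigmaInv k).toLinearMap - LinearMap.id)

/-- `R⁻`: the σ-anti-invariant trihomogeneous forms of multidegree (1,1,1). -/
noncomputable def Rminus (k : Type*) [Field k] : Submodule k (MvPolynomial (Fin 6) k) :=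
  weightedHomogeneousSubmodule k triWeight ((1,1,1) : ℕ × ℕ × ℕ) ⊓
    LinearMap.ker ((sigmaInv k).toLinearMap + LinearMap.id)

/-! ### Auxiliary lemmas -/

theorem sigma_monomial {k : Type*} [Field k] (d : Fin 6 →₀ ℕ) (c : k) :
    sigmaInv k (monomial d c) = (-1 : k) ^ (d 1 + d 3 + d 5) • monomial d c := by
  rw [sigmaInv, aeval_monomial, Finsupp.prod_fintype _ _ (fun i => pow_zero _),
    Fin.prod_univ_six]
  simp only [monomial_eq, Finsupp.prod_fintype _ _ (fun i => pow_zero _), Fin.prod_univ_six,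
    show Even ((0:Fin 6):ℕ) from by decide, show ¬ Even ((1:Fin 6):ℕ) from by decide,
    show Even ((2:Fin 6):ℕ) from by decide, show ¬ Even ((3:Fin 6):ℕ) from by decide,
    show Even ((4:Fin 6):ℕ) from by decide, show ¬ Even ((5:Fin 6):ℕ) from by decide,
    if_true, if_false, neg_pow (X 1 : MvPolynomial (Fin 6) k), neg_pow (X 3 : MvPolynomial (Fin 6) k),
    neg_pow (X 5 : MvPolynomial (Fin 6) k), smul_eq_C_mul,
    algebraMap_eq, map_mul, map_pow, map_neg, map_one, pow_add]
  ring

theorem coeff_sigma {k : Type*} [Field k] (f : MvPolynomial (Fin 6) k) (d : Fin 6 →₀ ℕ) :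
    coeff d (sigmaInv k f) = (-1 : k) ^ (d 1 + d 3 + d 5) * coeff d f := by
  conv_lhs => rw [f.as_sum, map_sum]
  rw [coeff_sum]
  simp only [sigma_monomial, coeff_smul, coeff_monomial, smul_eq_mul]
  rw [Finset.sum_eq_single d]
  · simp
  · intro b _ hb; simp [hb]
  · intro hd; simp [MvPolynomial.notMem_support_iff.mp hd]

/-- first factor of the splitting of an exponent of multidegree (2,2,2) -/
noncomputable def half1 (d : Fin 6 →₀ ℕ) : Fin 6 →₀ ℕ :=
  Finsupp.equivFunOnFinite.symm
    ![min (d 0) 1, 1 - min (d 0) 1, min (d 2) 1, 1 - min (d 2) 1, min (d 4) 1, 1 - min (d 4) 1]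

/-- second factor of the splitting of an exponent of multidegree (2,2,2) -/
noncomputable def half2 (d : Fin 6 →₀ ℕ) : Fin 6 →₀ ℕ :=
  Finsupp.equivFunOnFinite.symm
    ![d 0 - min (d 0) 1, d 1 - (1 - min (d 0) 1), d 2 - min (d 2) 1,
      d 3 - (1 - min (d 2) 1), d 4 - min (d 4) 1, d 5 - (1 - min (d 4) 1)]

theorem half1_app (d : Fin 6 →₀ ℕ) :
    half1 d 0 = min (d 0) 1 ∧ half1 d 1 = 1 - min (d 0) 1 ∧ half1 d 2 = min (d 2) 1 ∧
    half1 d 3 = 1 - min (d 2) 1 ∧ half1 d 4 = min (d 4) 1 ∧ half1 d 5 = 1 - min (d 4) 1 :=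
  ⟨rfl, rfl, rfl, rfl, rfl, rfl⟩

theorem half2_app (d : Fin 6 →₀ ℕ) :
    half2 d 0 = d 0 - min (d 0) 1 ∧ half2 d 1 = d 1 - (1 - min (d 0) 1) ∧
    half2 d 2 = d 2 - min (d 2) 1 ∧ half2 d 3 = d 3 - (1 - min (d 2) 1) ∧
    half2 d 4 = d 4 - min (d 4) 1 ∧ half2 d 5 = d 5 - (1 - min (d 4) 1) :=
  ⟨rfl, rfl, rfl, rfl, rfl, rfl⟩

theorem weight_tri (d : Fin 6 →₀ ℕ) :
    Finsupp.weight triWeight d = (d 0 + d 1, d 2 + d 3, d 4 + d 5) := by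
  rw [Finsupp.weight_apply, Finsupp.sum_fintype _ _ (fun i => by simp), Fin.sum_univ_six]
  simp only [show triWeight 0 = ((1,0,0):ℕ×ℕ×ℕ) from rfl,
    show triWeight 1 = ((1,0,0):ℕ×ℕ×ℕ) from rfl,
    show triWeight 2 = ((0,1,0):ℕ×ℕ×ℕ) from rfl, show triWeight 3 = ((0,1,0):ℕ×ℕ×ℕ) from rfl,
    show triWeight 4 = ((0,0,1):ℕ×ℕ×ℕ) from rfl, show triWeight 5 = ((0,0,1):ℕ×ℕ×ℕ) from rfl,
    Prod.smul_mk, smul_eq_mul, Prod.mk_add_mk, mul_one, mul_zero, add_zero, zero_add]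

set_option maxHeartbeats 1000000 in
theorem halves (d : Fin 6 →₀ ℕ) (h0 : d 0 + d 1 = 2) (h2 : d 2 + d 3 = 2)
    (h4 : d 4 + d 5 = 2) :
    half1 d + half2 d = d ∧ Finsupp.weight triWeight (half1 d) = (1,1,1) ∧
      Finsupp.weight triWeight (half2 d) = (1,1,1) := by
  obtain ⟨a0, a1, a2, a3, a4, a5⟩ := half1_app d
  obtain ⟨b0, b1, b2, b3, b4, b5⟩ := half2_app d
  refine ⟨Finsupp.ext fun i => ?_, ?_, ?_⟩
  · fin_cases i
    · show half1 d 0 + half2 d 0 = d 0; rw [a0, b0]; omega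
    · show half1 d 1 + half2 d 1 = d 1; rw [a1, b1]; omega
    · show half1 d 2 + half2 d 2 = d 2; rw [a2, b2]; omega
    · show half1 d 3 + half2 d 3 = d 3; rw [a3, b3]; omega
    · show half1 d 4 + half2 d 4 = d 4; rw [a4, b4]; omega
    · show half1 d 5 + half2 d 5 = d 5; rw [a5, b5]; omega
  · rw [weight_tri, a0, a1, a2, a3, a4, a5, Prod.mk.injEq, Prod.mk.injEq]
    omega
  · rw [weight_tri, b0, b1, b2, b3, b4, b5, Prod.mk.injEq, Prod.mk.injEq]
    omega

theorem monomial_mem_Rplus {k : Type*} [Field k] (e : Fin 6 →₀ ℕ) (c : k)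
    (hw : Finsupp.weight triWeight e = ((1,1,1) : ℕ × ℕ × ℕ))
    (hp : Even (e 1 + e 3 + e 5)) : monomial e c ∈ Rplus k := by
  refine Submodule.mem_inf.mpr ⟨isWeightedHomogeneous_monomial _ _ _ hw, ?_⟩
  rw [LinearMap.mem_ker, LinearMap.sub_apply, LinearMap.id_apply, sub_eq_zero]
  show sigmaInv k (monomial e c) = monomial e c
  rw [sigma_monomial, hp.neg_one_pow, one_smul]

theorem monomial_mem_Rminus {k : Type*} [Field k] (e : Fin 6 →₀ ℕ) (c : k)
    (hw : Finsupp.weight triWeight e = ((1,1,1) : ℕ × ℕ × ℕ))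
    (hp : ¬ Even (e 1 + e 3 + e 5)) : monomial e c ∈ Rminus k := by
  refine Submodule.mem_inf.mpr ⟨isWeightedHomogeneous_monomial _ _ _ hw, ?_⟩
  rw [LinearMap.mem_ker, LinearMap.add_apply, LinearMap.id_apply]
  show sigmaInv k (monomial e c) + monomial e c = 0
  rw [sigma_monomial, (Nat.odd_iff.mpr (Nat.not_even_iff.mp hp)).neg_one_pow, neg_one_smul,
    neg_add_cancel]

/-- Every σ-invariant trihomogeneous form of multidegree (2,2,2) is a finite
sum `Σᵢ gᵢhᵢ + Σⱼ g′ⱼh′ⱼ` with `gᵢ,hᵢ ∈ R⁺` and `g′ⱼ,h′ⱼ ∈ R⁻`. -/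
theorem stmt3 (k : Type*) [Field k] [CharZero k]
    (f : MvPolynomial (Fin 6) k)
    (hf : f ∈ weightedHomogeneousSubmodule k triWeight ((2,2,2) : ℕ × ℕ × ℕ))
    (hinv : sigmaInv k f = f) :
    ∃ (n m : ℕ) (g h : Fin n → MvPolynomial (Fin 6) k)
      (g' h' : Fin m → MvPolynomial (Fin 6) k),
      (∀ i, g i ∈ Rplus k) ∧ (∀ i, h i ∈ Rplus k) ∧
      (∀ j, g' j ∈ Rminus k) ∧ (∀ j, h' j ∈ Rminus k) ∧
      f = (∑ i, g i * h i) + (∑ j, g' j * h' j) := by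
  classical
  -- each exponent in the support has multidegree (2,2,2)
  have hdeg : ∀ d ∈ f.support, d 0 + d 1 = 2 ∧ d 2 + d 3 = 2 ∧ d 4 + d 5 = 2 := by
    intro d hd
    have := hf (mem_support_iff.mp hd)
    rw [weight_tri, Prod.mk.injEq, Prod.mk.injEq] at this
    exact ⟨this.1, this.2.1, this.2.2⟩
  -- each exponent in the support has even "odd part"
  have heven : ∀ d ∈ f.support, Even (d 1 + d 3 + d 5) := by
    intro d hd
    by_contra hodd
    have hcs := coeff_sigma f d
    rw [hinv, (Nat.odd_iff.mpr (Nat.not_even_iff.mp hodd)).neg_one_pow] at hcs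
    have h2 : (2 : k) * coeff d f = 0 := by linear_combination hcs
    exact mem_support_iff.mp hd
      ((mul_eq_zero.mp h2).resolve_left two_ne_zero)
  -- split the support according to the parity of half1
  set P : (Fin 6 →₀ ℕ) → Prop :=
    fun d => Even (half1 d 1 + half1 d 3 + half1 d 5) with hP
  set sp : Finset (Fin 6 →₀ ℕ) := f.support.filter P with hsp
  set sm : Finset (Fin 6 →₀ ℕ) := f.support.filter (fun d => ¬ P d) with hsm
  set F : (Fin 6 →₀ ℕ) → MvPolynomial (Fin 6) k := fun d => monomial d (coeff d f) with hF
  have hsplit : f = (∑ d ∈ sp, F d) + (∑ d ∈ sm, F d) := by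
    rw [hsp, hsm, Finset.sum_filter_add_sum_filter_not]
    exact f.as_sum
  -- index the two finsets by Fin n
  let ep : Fin sp.card ≃ sp := sp.equivFin.symm
  let em : Fin sm.card ≃ sm := sm.equivFin.symm
  refine ⟨sp.card, sm.card,
    fun i => monomial (half1 (ep i)) (coeff (ep i) f),
    fun i => monomial (half2 (ep i)) 1,
    fun j => monomial (half1 (em j)) (coeff (em j) f),
    fun j => monomial (half2 (em j)) 1, ?_, ?_, ?_, ?_, ?_⟩
  · intro i
    set d : Fin 6 →₀ ℕ := ↑(ep i) with hdd
    have hd : d ∈ sp := (ep i).2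
    obtain ⟨hds, hdp⟩ := Finset.mem_filter.mp hd
    simp only [hP] at hdp
    obtain ⟨h0, h2, h4⟩ := hdeg d hds
    exact monomial_mem_Rplus _ _ (halves d h0 h2 h4).2.1 hdp
  · intro i
    set d : Fin 6 →₀ ℕ := ↑(ep i) with hdd
    have hd : d ∈ sp := (ep i).2
    obtain ⟨hds, hdp⟩ := Finset.mem_filter.mp hd
    simp only [hP] at hdp
    obtain ⟨h0, h2, h4⟩ := hdeg d hds
    obtain ⟨hadd, -, hw2⟩ := halves d h0 h2 h4
    refine monomial_mem_Rplus _ _ hw2 ?_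
    show Even (half2 d 1 + half2 d 3 + half2 d 5)
    have e1 : half1 d 1 + half2 d 1 = d 1 := by rw [← Finsupp.add_apply, hadd]
    have e3 : half1 d 3 + half2 d 3 = d 3 := by rw [← Finsupp.add_apply, hadd]
    have e5 : half1 d 5 + half2 d 5 = d 5 := by rw [← Finsupp.add_apply, hadd]
    have ht := heven d hds
    rw [Nat.even_iff] at ht hdp ⊢
    omega
  · intro j
    set d : Fin 6 →₀ ℕ := ↑(em j) with hdd
    have hd : d ∈ sm := (em j).2
    obtain ⟨hds, hdp⟩ := Finset.mem_filter.mp hd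
    simp only [hP] at hdp
    obtain ⟨h0, h2, h4⟩ := hdeg d hds
    exact monomial_mem_Rminus _ _ (halves d h0 h2 h4).2.1 hdp
  · intro j
    set d : Fin 6 →₀ ℕ := ↑(em j) with hdd
    have hd : d ∈ sm := (em j).2
    obtain ⟨hds, hdp⟩ := Finset.mem_filter.mp hd
    simp only [hP] at hdp
    obtain ⟨h0, h2, h4⟩ := hdeg d hds
    obtain ⟨hadd, -, hw2⟩ := halves d h0 h2 h4
    refine monomial_mem_Rminus _ _ hw2 ?_
    show ¬ Even (half2 d 1 + half2 d 3 + half2 d 5)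
    have e1 : half1 d 1 + half2 d 1 = d 1 := by rw [← Finsupp.add_apply, hadd]
    have e3 : half1 d 3 + half2 d 3 = d 3 := by rw [← Finsupp.add_apply, hadd]
    have e5 : half1 d 5 + half2 d 5 = d 5 := by rw [← Finsupp.add_apply, hadd]
    have ht := heven d hds
    rw [Nat.even_iff] at ht ⊢
    rw [Nat.even_iff] at hdp
    omega
  · conv_lhs => rw [hsplit]
    congr 1
    · rw [← Finset.sum_coe_sort sp F, ← Equiv.sum_comp ep (fun x : sp => F x)]
      refine Finset.sum_congr rfl fun i _ => ?_
      obtain ⟨hds, -⟩ := Finset.mem_filter.mp (ep i).2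
      obtain ⟨h0, h2, h4⟩ := hdeg _ hds
      rw [hF, monomial_mul, mul_one, (halves _ h0 h2 h4).1]
    · rw [← Finset.sum_coe_sort sm F, ← Equiv.sum_comp em (fun x : sm => F x)]
      refine Finset.sum_congr rfl fun j _ => ?_
      obtain ⟨hds, -⟩ := Finset.mem_filter.mp (em j).2
      obtain ⟨h0, h2, h4⟩ := hdeg _ hds
      rw [hF, monomial_mul, mul_one, (halves _ h0 h2 h4).1]
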